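/- For |t| < ‖V‖^{-1}, the Lie-Schwinger series Σ_{l≥0} (t^l/l!) {H_Λ, A}^{(l)} converges absolutely in the sup-norm on Ξ_Λ for any polynomial observable A = M^β, and its sum equals A ∘ φ^t_Λ, the composition of A with the Hamiltonian flow at time t. -/

import Mathlib

open scoped BigOperators

/-- The index set `I = {+, z, -}` of complex spin coordinates. -/
inductive Idx : Type
  | plus | z | minus
deriving DecidableEq

instance : Fintype Idx :=
  ⟨{Idx.plus, Idx.z, Idx.minus}, fun i => by cases i <;> simp⟩

/-- The symbol `ε̃_{ijk}`: `ε̃_{+−z} = 1`, `ε̃_{−+z} = −1`, `ε̃_{+z+} = −1`,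
`ε̃_{−z−} = 1`, `ε̃_{z++} = 1`, `ε̃_{z−−} = −1`, and `ε̃_{ijk} = 0` otherwise. -/
def eps : Idx → Idx → Idx → ℂ
  | .plus, .minus, .z => 1
  | .minus, .plus, .z => -1
  | .plus, .z, .plus => -1
  | .minus, .z, .minus => 1
  | .z, .plus, .plus => 1
  | .z, .minus, .minus => -1
  | _, _, _ => 0

/-- Conjugation `+ ↦ −`, `z ↦ z`, `− ↦ +` on the index set. -/
def Idx.bar : Idx → Idx
  | .plus => .minus
  | .z => .z
  | .minus => .plus

/-- The complex coordinates `(M_+, M_z, M_-)` of a vector `M ∈ ℝ³`: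
`M_± = (M_1 ± i M_2)/√2`, `M_z = M_3`. -/
noncomputable def coord : Idx → (Fin 3 → ℝ) → ℂ
  | .plus => fun v => ((v 0 : ℂ) + Complex.I * (v 1 : ℂ)) / (Real.sqrt 2 : ℂ)
  | .z => fun v => (v 2 : ℂ)
  | .minus => fun v => ((v 0 : ℂ) - Complex.I * (v 1 : ℂ)) / (Real.sqrt 2 : ℂ)

variable {Λ : Type*}

/-- Membership in the phase space `Ξ_Λ = Π_{x∈Λ} B̄₁(0)`. -/
def inBall (M : Λ → Fin 3 → ℝ) : Prop :=
  ∀ x, (M x 0) ^ 2 + (M x 1) ^ 2 + (M x 2) ^ 2 ≤ 1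

/-- The monomial `M^α`. -/
noncomputable def monom (α : (Idx × Λ) →₀ ℕ) : MvPolynomial (Idx × Λ) ℂ :=
  MvPolynomial.monomial α 1

/-- Evaluation of a polynomial observable at a spin configuration `M`. -/
noncomputable def evalAt (M : Λ → Fin 3 → ℝ) (F : MvPolynomial (Idx × Λ) ℂ) : ℂ :=
  MvPolynomial.eval (fun p => coord p.1 (M p.2)) F

/-- Evaluation of the monomial `M^γ` at a (possibly infinite-volume) spin
configuration `M`. -/
noncomputable def evalMonom (M : Λ → Fin 3 → ℝ) (γ : (Idx × Λ) →₀ ℕ) : ℂ :=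
  γ.prod fun p m => (coord p.1 (M p.2)) ^ m

/-- The degree `|α|` of a multi-index. -/
def deg (α : (Idx × Λ) →₀ ℕ) : ℕ := α.sum fun _ m => m

/-- `|α(x)| = Σ_{i∈I} α_i(x)`. -/
def wt (α : (Idx × Λ) →₀ ℕ) (x : Λ) : ℕ := ∑ i : Idx, α (i, x)

/-- The conjugate multi-index `ᾱ`, with `ᾱ_i(x) = α_{ī}(x)`. -/
def barMulti [DecidableEq Λ] (α : (Idx × Λ) →₀ ℕ) : (Idx × Λ) →₀ ℕ :=
  α.equivMapDomain
    (Equiv.prodCongr ⟨Idx.bar, Idx.bar, fun i => by cases i <;> rfl,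
      fun i => by cases i <;> rfl⟩ (Equiv.refl Λ))

/-- `Σ_{|α| = n} |α(x)| |V(α)|`. -/
noncomputable def VnormPart (V : ((Idx × Λ) →₀ ℕ) → ℂ) (n : ℕ) (x : Λ) : ℝ :=
  ∑' α : {α : (Idx × Λ) →₀ ℕ // deg α = n}, (wt α.1 x : ℝ) * ‖V α.1‖

/-- The norm `‖V‖ = Σ_n sup_x Σ_{|α|=n} |α(x)| |V(α)| e^n` of an interaction
potential. -/
noncomputable def Vnorm [Nonempty Λ] (V : ((Idx × Λ) →₀ ℕ) → ℂ) : ℝ :=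
  ∑' n : ℕ, (⨆ x : Λ, VnormPart V n x) * Real.exp n

section Bracket

variable [Fintype Λ] [DecidableEq Λ]

/-- The Poisson bracket on the polynomial algebra `P_Λ`, the unique biderivation
with `{M_i(x), M_j(y)} = i ε̃_{ijk} δ(x,y) M_k(x)`. -/
noncomputable def pb (F G : MvPolynomial (Idx × Λ) ℂ) : MvPolynomial (Idx × Λ) ℂ :=
  ∑ x : Λ, ∑ i : Idx, ∑ j : Idx, ∑ k : Idx,
    MvPolynomial.C (Complex.I * eps i j k) *
      (MvPolynomial.pderiv (i, x) F) * (MvPolynomial.pderiv (j, x) G) *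
        MvPolynomial.X (k, x)

/-- The iterated Poisson bracket `{H, A}^{(l)}`. -/
noncomputable def pbIter (H : MvPolynomial (Idx × Λ) ℂ) :
    ℕ → MvPolynomial (Idx × Λ) ℂ → MvPolynomial (Idx × Λ) ℂ
  | 0, A => A
  | l + 1, A => pb H (pbIter H l A)

/-- The sup-norm `‖A‖_∞ = sup_{M ∈ Ξ_Λ} |A(M)|` of a polynomial observable. -/
noncomputable def supNorm (F : MvPolynomial (Idx × Λ) ℂ) : ℝ :=
  ⨆ M : {M : Λ → Fin 3 → ℝ // inBall M}, ‖evalAt M.1 F‖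

/-- The classical Hamilton function `H_Λ = Σ_α V(α) M^α` of a finitely supported
interaction potential. -/
noncomputable def Hcl (V : ((Idx × Λ) →₀ ℕ) →₀ ℂ) : MvPolynomial (Idx × Λ) ℂ :=
  ∑ α ∈ V.support, MvPolynomial.C (V α) * monom α

end Bracket

/-!
Along a solution of the equations of motion, `d/dτ A(M(τ)) = {H_Λ, A}(M(τ))` for every polynomial
`A`, since `{H_Λ, ·}` is a derivation; hence the Lie–Schwinger series is the Taylor series of
`A ∘ φ^t` and it suffices to bound the Lagrange remainder. The Casimirs `|M(x)|² = 2 M₊M₋ + M_z²`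
Poisson-commute with everything, so the trajectory stays in `Ξ_Λ`, where `|F| ≤ N_0(F)` for the
weighted coefficient norms `N_θ(F) = Σ_γ |F_γ| e^{θ|γ|}`. A Cauchy estimate
`N_θ({H_Λ, F}) ≤ ‖V‖/(e²δ) · N_{θ+δ}(F)` (from `|γ| e^{θ|γ|} ≤ e^{(θ+δ)|γ|}/(eδ)`), applied `l`
times with `δ = 1/l`, gives `‖{H_Λ, M^β}^{(l)}‖_∞ ≤ (l‖V‖/e²)^l e^{|β|}`. Since `l^l ≤ e^l l!`, the
`l`-th term is at most `e^{|β|} (|t|‖V‖/e)^l`, a convergent geometric series for `|t| < ‖V‖⁻¹`.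
-/

open Filter Topology

section Taylor

variable {E : Type*} [NormedAddCommGroup E] [NormedSpace ℝ E]

theorem iteratedDeriv_eq_of_hasDerivAt {g : ℕ → ℝ → E}
    (hg : ∀ l τ, HasDerivAt (g l) (g (l + 1) τ) τ) (n : ℕ) :
    iteratedDeriv n (g 0) = g n := by
  induction n with
  | zero => exact iteratedDeriv_zero
  | succ n ih => rw [iteratedDeriv_succ, ih]; exact funext fun τ => (hg n τ).deriv

/-- `n * (b n / n!) = b n / (n - 1)!` is Lagrange's bound for the remainder of order `n - 1`. -/
theorem tendsto_sum_taylor_of_hasDerivAt {g : ℕ → ℝ → E}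
    (hg : ∀ l τ, HasDerivAt (g l) (g (l + 1) τ) τ) {b : ℕ → ℝ}
    (hb : ∀ l, ∀ τ ∈ Set.Icc (0 : ℝ) 1, ‖g l τ‖ ≤ b l)
    (hlim : Tendsto (fun n => n * (b n / n.factorial)) atTop (𝓝 0)) :
    Tendsto (fun n => ∑ l ∈ Finset.range n, (l.factorial : ℝ)⁻¹ • g l 0) atTop (𝓝 (g 0 1)) := by
  have hiter := iteratedDeriv_eq_of_hasDerivAt hg
  have hsmooth : ContDiff ℝ (⊤ : ℕ∞) (g 0) := contDiff_of_differentiable_iteratedDeriv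
    fun m _ => hiter m ▸ fun τ => (hg m τ).differentiableAt
  have hwithin : ∀ n, ∀ τ ∈ Set.Icc (0 : ℝ) 1,
      iteratedDerivWithin n (g 0) (Set.Icc 0 1) τ = g n τ := fun n τ hτ => by
    rw [iteratedDerivWithin_eq_iteratedDeriv (uniqueDiffOn_Icc zero_lt_one)
      (hsmooth.contDiffAt.of_le (by exact_mod_cast le_top)) hτ, hiter]
  have htaylor : ∀ n, taylorWithinEval (g 0) n (Set.Icc 0 1) 0 1 =
      ∑ l ∈ Finset.range (n + 1), (l.factorial : ℝ)⁻¹ • g l 0 := fun n => by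
    rw [taylor_within_apply]
    refine Finset.sum_congr rfl fun l _ => ?_
    rw [hwithin l 0 ⟨le_rfl, zero_le_one⟩, sub_zero, one_pow, mul_one]
  have hremainder : ∀ n, ‖g 0 1 - ∑ l ∈ Finset.range (n + 1), (l.factorial : ℝ)⁻¹ • g l 0‖
      ≤ (n + 1 : ℕ) * (b (n + 1) / (n + 1).factorial) := fun n => by
    rw [← htaylor]
    refine (taylor_mean_remainder_bound zero_le_one
      (hsmooth.contDiffOn.of_le (by exact_mod_cast le_top)) ⟨zero_le_one, le_rfl⟩
      fun τ hτ => hwithin (n + 1) τ hτ ▸ hb (n + 1) τ hτ).trans_eq ?_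
    rw [Nat.factorial_succ]
    push_cast
    field_simp
    ring
  refine (tendsto_add_atTop_iff_nat 1).mp (tendsto_iff_norm_sub_tendsto_zero.mpr ?_)
  refine squeeze_zero (fun _ => norm_nonneg _) (fun n => ?_)
    ((tendsto_add_atTop_iff_nat 1).mpr hlim)
  rw [norm_sub_rev]
  exact hremainder n

end Taylor

theorem Real.mul_exp_le_exp_div {δ : ℝ} (hδ : 0 < δ) (θ d : ℝ) :
    d * Real.exp (θ * d) ≤ Real.exp ((θ + δ) * d) / (Real.exp 1 * δ) := by
  rw [le_div_iff₀ (by positivity)]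
  calc d * Real.exp (θ * d) * (Real.exp 1 * δ) = (δ * d - 1 + 1) * Real.exp (θ * d + 1) := by
        rw [Real.exp_add]; ring
    _ ≤ Real.exp (δ * d - 1) * Real.exp (θ * d + 1) := by
        gcongr; exact Real.add_one_le_exp _
    _ = Real.exp ((θ + δ) * d) := by rw [← Real.exp_add]; ring_nf

theorem Finsupp.degree_tsub_single_add_one {σ : Type*} {α : σ →₀ ℕ} {p : σ} (h : α p ≠ 0) :
    (α - Finsupp.single p 1).degree + 1 = α.degree := by
  conv_rhs => rw [← tsub_add_cancel_of_le (Finsupp.single_le_iff.mpr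
    (Nat.one_le_iff_ne_zero.mpr h))]
  rw [map_add, Finsupp.degree_single]

namespace MvPolynomial

theorem hasDerivAt_eval_of_derivation {σ 𝔸 : Type*} [NormedCommRing 𝔸] [NormedAlgebra ℝ 𝔸]
    {D : Derivation 𝔸 (MvPolynomial σ 𝔸) (MvPolynomial σ 𝔸)} {x : ℝ → σ → 𝔸} {τ : ℝ}
    (hx : ∀ i, HasDerivAt (fun τ => x τ i) (eval (x τ) (D (X i))) τ) (F : MvPolynomial σ 𝔸) :
    HasDerivAt (fun τ => eval (x τ) F) (eval (x τ) (D F)) τ := by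
  induction F using MvPolynomial.induction_on with
  | C c =>
    rw [← algebraMap_eq, D.map_algebraMap, map_zero]
    simpa only [algebraMap_eq, eval_C] using hasDerivAt_const τ c
  | add F G hF hG => simp only [map_add]; exact hF.add hG
  | mul_X F i hF =>
    simp only [map_mul, eval_X, Derivation.leibniz, smul_eq_mul, map_add]
    convert hF.mul (hx i) using 1
    · rfl
    · ring

variable {σ R : Type*} [NormedCommRing R]

noncomputable def weightedNorm (θ : ℝ) (F : MvPolynomial σ R) : ℝ :=
  ∑ γ ∈ F.support, ‖F.coeff γ‖ * Real.exp (θ * γ.degree)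

variable {θ : ℝ}

theorem weightedNorm_eq_sum_of_support_subset {F : MvPolynomial σ R} {s : Finset (σ →₀ ℕ)}
    (h : F.support ⊆ s) :
    weightedNorm θ F = ∑ γ ∈ s, ‖F.coeff γ‖ * Real.exp (θ * γ.degree) :=
  Finset.sum_subset h fun γ _ hγ => by rw [notMem_support_iff.mp hγ, norm_zero, zero_mul]

theorem weightedNorm_monomial (γ : σ →₀ ℕ) (c : R) :
    weightedNorm θ (monomial γ c) = ‖c‖ * Real.exp (θ * γ.degree) := by
  classical
  rw [weightedNorm_eq_sum_of_support_subset support_monomial_subset, Finset.sum_singleton,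
    coeff_monomial, if_pos rfl]

theorem weightedNorm_add_le (F G : MvPolynomial σ R) :
    weightedNorm θ (F + G) ≤ weightedNorm θ F + weightedNorm θ G := by
  classical
  rw [weightedNorm_eq_sum_of_support_subset support_add,
    weightedNorm_eq_sum_of_support_subset (Finset.subset_union_left (s₂ := G.support)),
    weightedNorm_eq_sum_of_support_subset (Finset.subset_union_right (s₁ := F.support)),
    ← Finset.sum_add_distrib]
  refine Finset.sum_le_sum fun γ _ => ?_
  rw [coeff_add, ← add_mul]
  gcongr
  exact norm_add_le _ _

theorem weightedNorm_sum_le {ι : Type*} (s : Finset ι) (F : ι → MvPolynomial σ R) :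
    weightedNorm θ (∑ a ∈ s, F a) ≤ ∑ a ∈ s, weightedNorm θ (F a) :=
  Finset.le_sum_of_subadditive _ (by simp [weightedNorm]) weightedNorm_add_le s F

theorem weightedNorm_smul_le (c : R) (F : MvPolynomial σ R) :
    weightedNorm θ (c • F) ≤ ‖c‖ * weightedNorm θ F := by
  rw [weightedNorm_eq_sum_of_support_subset support_smul, weightedNorm, Finset.mul_sum]
  refine Finset.sum_le_sum fun γ _ => ?_
  rw [coeff_smul, smul_eq_mul, ← mul_assoc]
  gcongr
  exact norm_mul_le _ _

theorem norm_eval_le_weightedNorm_zero [NormOneClass R] {x : σ → R} (hx : ∀ i, ‖x i‖ ≤ 1)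
    (F : MvPolynomial σ R) : ‖eval x F‖ ≤ weightedNorm 0 F := by
  rw [eval_eq]
  refine (norm_sum_le _ _).trans (Finset.sum_le_sum fun γ _ => ?_)
  rw [zero_mul, Real.exp_zero, mul_one]
  refine (norm_mul_le _ _).trans (mul_le_of_le_one_right (norm_nonneg _) ?_)
  exact (Finset.norm_prod_le _ _).trans (Finset.prod_le_one (fun _ _ => norm_nonneg _)
    fun i _ => (norm_pow_le _ _).trans (pow_le_one₀ (norm_nonneg _) (hx i)))

end MvPolynomial

open MvPolynomial

theorem Idx.sum_univ {M : Type*} [AddCommMonoid M] (f : Idx → M) :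
    ∑ i, f i = f .plus + f .z + f .minus := by
  rw [show (Finset.univ : Finset Idx) = {.plus, .z, .minus} from rfl]
  simp [add_assoc]

theorem sum_norm_eps_le_one (i j : Idx) : ∑ k, ‖eps i j k‖ ≤ 1 := by
  cases i <;> cases j <;> norm_num [Idx.sum_univ, eps]

theorem norm_coord_le_one (i : Idx) {v : Fin 3 → ℝ} (hv : v 0 ^ 2 + v 1 ^ 2 + v 2 ^ 2 ≤ 1) :
    ‖coord i v‖ ≤ 1 := by
  have hsqrt : Real.sqrt 2 ^ 2 = 2 := Real.sq_sqrt zero_le_two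
  rw [← sq_le_one_iff₀ (norm_nonneg _), Complex.sq_norm]
  cases i <;> simp [coord, Complex.normSq_apply] <;> field_simp <;>
    nlinarith [sq_nonneg (v 0), sq_nonneg (v 1), sq_nonneg (v 2)]

section Lattice

variable {Λ : Type*}

theorem deg_eq_degree (α : (Idx × Λ) →₀ ℕ) : deg α = α.degree := rfl

theorem weightedNorm_monom (θ : ℝ) (β : (Idx × Λ) →₀ ℕ) :
    weightedNorm θ (monom β) = Real.exp (θ * deg β) := by
  rw [monom, weightedNorm_monomial, norm_one, one_mul, deg_eq_degree]

theorem eq_sum_smul_monom (F : MvPolynomial (Idx × Λ) ℂ) :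
    F = ∑ γ ∈ F.support, F.coeff γ • monom γ := by
  conv_lhs => rw [F.as_sum]
  simp only [monom, smul_monomial, smul_eq_mul, mul_one]

theorem Hcl_eq_sum_smul_monom (V : ((Idx × Λ) →₀ ℕ) →₀ ℂ) :
    Hcl V = ∑ α ∈ V.support, V α • monom α := by
  simp only [Hcl, C_mul']

theorem coeff_Hcl (V : ((Idx × Λ) →₀ ℕ) →₀ ℂ) (α : (Idx × Λ) →₀ ℕ) : (Hcl V).coeff α = V α := by
  classical
  simp [Hcl_eq_sum_smul_monom, coeff_sum, monom, coeff_monomial, eq_comm]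

theorem support_Hcl (V : ((Idx × Λ) →₀ ℕ) →₀ ℂ) : (Hcl V).support = V.support := by
  ext α
  simp only [mem_support_iff, Finsupp.mem_support_iff, coeff_Hcl]

noncomputable def casimir (x : Λ) : MvPolynomial (Idx × Λ) ℂ :=
  C 2 * (X (.plus, x) * X (.minus, x)) + X (.z, x) * X (.z, x)

theorem evalAt_casimir (M : Λ → Fin 3 → ℝ) (x : Λ) :
    evalAt M (casimir x) = ((M x 0 ^ 2 + M x 1 ^ 2 + M x 2 ^ 2 : ℝ) : ℂ) := by
  have hsqrt : ((Real.sqrt 2 : ℝ) : ℂ) ^ 2 = 2 := by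
    rw [← Complex.ofReal_pow, Real.sq_sqrt zero_le_two, Complex.ofReal_ofNat]
  have hsqrt0 : ((Real.sqrt 2 : ℝ) : ℂ) ≠ 0 := by
    exact_mod_cast (Real.sqrt_pos.mpr zero_lt_two).ne'
  simp only [evalAt, casimir, map_add, map_mul, eval_C, eval_X, coord]
  field_simp
  rw [hsqrt]
  push_cast
  linear_combination (-2 * (M x 1 : ℂ) ^ 2) * Complex.I_sq

instance : Nonempty {M : Λ → Fin 3 → ℝ // inBall M} := ⟨⟨0, fun _ => by simp⟩⟩

theorem norm_evalAt_le_weightedNorm_zero {M : Λ → Fin 3 → ℝ} (hM : inBall M)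
    (F : MvPolynomial (Idx × Λ) ℂ) : ‖evalAt M F‖ ≤ weightedNorm 0 F := by
  have hx : ∀ p : Idx × Λ, ‖coord p.1 (M p.2)‖ ≤ 1 := fun p => norm_coord_le_one p.1 (hM p.2)
  exact norm_eval_le_weightedNorm_zero hx F

theorem supNorm_nonneg (F : MvPolynomial (Idx × Λ) ℂ) : 0 ≤ supNorm F :=
  Real.iSup_nonneg fun _ => norm_nonneg _

theorem supNorm_le_weightedNorm_zero (F : MvPolynomial (Idx × Λ) ℂ) :
    supNorm F ≤ weightedNorm 0 F :=
  ciSup_le fun M => norm_evalAt_le_weightedNorm_zero M.2 F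

theorem norm_evalAt_le_supNorm {M : Λ → Fin 3 → ℝ} (hM : inBall M)
    (F : MvPolynomial (Idx × Λ) ℂ) : ‖evalAt M F‖ ≤ supNorm F :=
  le_ciSup (f := fun M : {M // inBall M} => ‖evalAt M.1 F‖)
    ⟨weightedNorm 0 F, Set.forall_mem_range.mpr fun M => norm_evalAt_le_weightedNorm_zero M.2 F⟩
    ⟨M, hM⟩

theorem VnormPart_nonneg (V : ((Idx × Λ) →₀ ℕ) → ℂ) (n : ℕ) (x : Λ) : 0 ≤ VnormPart V n x :=
  tsum_nonneg fun _ => by positivity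

theorem Vnorm_nonneg [Nonempty Λ] (V : ((Idx × Λ) →₀ ℕ) → ℂ) : 0 ≤ Vnorm V :=
  tsum_nonneg fun n => mul_nonneg (Real.iSup_nonneg fun x => VnormPart_nonneg V n x)
    (Real.exp_pos _).le

theorem abs_mul_Vnorm_div_exp_lt_one [Nonempty Λ] {t : ℝ} (V : ((Idx × Λ) →₀ ℕ) → ℂ)
    (ht : |t| < (Vnorm V)⁻¹) : |t| * Vnorm V / Real.exp 1 < 1 := by
  refine (div_le_self (by have := Vnorm_nonneg V; positivity)
    (Real.one_le_exp zero_le_one)).trans_lt ?_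
  rcases (Vnorm_nonneg V).eq_or_lt with h | h
  · rw [← h, mul_zero]; exact one_pos
  · exact (lt_inv_mul_iff₀' h).mp (by rwa [mul_one])

theorem VnormPart_eq_sum (V : ((Idx × Λ) →₀ ℕ) →₀ ℂ) (n : ℕ) (x : Λ) :
    VnormPart (fun α => V α) n x = ∑ α ∈ V.support with deg α = n, (wt α x : ℝ) * ‖V α‖ := by
  classical
  change ∑' α : ({α | deg α = n} : Set _), _ = _
  rw [tsum_subtype {α | deg α = n} fun α => (wt α x : ℝ) * ‖V α‖,
    tsum_eq_sum (s := V.support) fun α hα => by simp [Finsupp.notMem_support_iff.mp hα],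
    Finset.sum_filter]
  exact Finset.sum_congr rfl fun α _ => by simp [Set.indicator_apply]

theorem sum_wt_mul_norm_mul_exp_le_Vnorm [Finite Λ] [Nonempty Λ]
    (V : ((Idx × Λ) →₀ ℕ) →₀ ℂ) (x : Λ) :
    ∑ α ∈ V.support, (wt α x : ℝ) * ‖V α‖ * Real.exp (deg α) ≤ Vnorm (fun α => V α) := by
  classical
  set W : ℕ → ℝ := fun n => (⨆ y, VnormPart (fun α => V α) n y) * Real.exp n
  have hW : Summable W := summable_of_ne_finset_zero (s := V.support.image deg) fun n hn => by
    have hzero : ∀ y, VnormPart (fun α => V α) n y = 0 := fun y => by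
      rw [VnormPart_eq_sum]
      refine Finset.sum_eq_zero fun α hα => absurd ?_ hn
      exact (Finset.mem_filter.mp hα).2 ▸ Finset.mem_image_of_mem deg (Finset.mem_filter.mp hα).1
    simp only [W, hzero, ciSup_const, zero_mul]
  calc ∑ α ∈ V.support, (wt α x : ℝ) * ‖V α‖ * Real.exp (deg α)
      = ∑ n ∈ V.support.image deg, VnormPart (fun α => V α) n x * Real.exp n := by
        rw [← Finset.sum_fiberwise_of_maps_to fun α hα => Finset.mem_image_of_mem deg hα]
        refine Finset.sum_congr rfl fun n _ => ?_
        rw [VnormPart_eq_sum, Finset.sum_mul]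
        exact Finset.sum_congr rfl fun α hα => by rw [(Finset.mem_filter.mp hα).2]
    _ ≤ ∑ n ∈ V.support.image deg, W n := by
        refine Finset.sum_le_sum fun n _ => mul_le_mul_of_nonneg_right ?_ (Real.exp_pos _).le
        exact le_ciSup (Set.finite_range fun y => VnormPart (fun α => V α) n y).bddAbove x
    _ ≤ Vnorm (fun α => V α) :=
        hW.sum_le_tsum _ fun n _ => mul_nonneg
          (Real.iSup_nonneg fun y => VnormPart_nonneg (fun α => V α) n y) (Real.exp_pos _).le

theorem weightedNorm_pb_term_le (θ : ℝ) (α γ : (Idx × Λ) →₀ ℕ) (i j k : Idx) (x : Λ) :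
    weightedNorm θ (C (Complex.I * eps i j k) * pderiv (i, x) (monom α) *
        pderiv (j, x) (monom γ) * X (k, x)) ≤
      ‖eps i j k‖ * α (i, x) * γ (j, x) * Real.exp (θ * (deg α + deg γ - 1)) := by
  classical
  rw [monom, monom, pderiv_monomial, pderiv_monomial, C_mul_monomial, monomial_mul, X,
    monomial_mul, weightedNorm_monomial]
  simp only [one_mul, mul_one, norm_mul, Complex.norm_I, Complex.norm_natCast]
  -- if `α (i, x) = 0` the truncated exponent `α - single (i, x) 1` has the wrong degree,
  -- but then the coefficient vanishes
  rcases eq_or_ne (α (i, x)) 0 with hα | hα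
  · simp [hα]
  rcases eq_or_ne (γ (j, x)) 0 with hγ | hγ
  · simp [hγ]
  have hα' : ((α - Finsupp.single (i, x) 1).degree : ℝ) = deg α - 1 := by
    rw [eq_sub_iff_add_eq]; exact_mod_cast Finsupp.degree_tsub_single_add_one hα
  have hγ' : ((γ - Finsupp.single (j, x) 1).degree : ℝ) = deg γ - 1 := by
    rw [eq_sub_iff_add_eq]; exact_mod_cast Finsupp.degree_tsub_single_add_one hγ
  simp only [map_add, Finsupp.degree_single, Nat.cast_add, hα', hγ', Nat.cast_one]
  rw [show (deg α : ℝ) - 1 + (deg γ - 1) + 1 = deg α + deg γ - 1 by ring]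

section Bracket

variable [Fintype Λ]

theorem pb_add_left (F G H : MvPolynomial (Idx × Λ) ℂ) : pb (F + G) H = pb F H + pb G H := by
  simp only [pb, map_add, mul_add, add_mul, Finset.sum_add_distrib]

theorem pb_add_right (H F G : MvPolynomial (Idx × Λ) ℂ) : pb H (F + G) = pb H F + pb H G := by
  simp only [pb, map_add, mul_add, add_mul, Finset.sum_add_distrib]

theorem pb_smul_left (c : ℂ) (F G : MvPolynomial (Idx × Λ) ℂ) : pb (c • F) G = c • pb F G := by
  simp only [pb, Derivation.map_smul, Finset.smul_sum, smul_mul_assoc, mul_smul_comm]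

theorem pb_smul_right (c : ℂ) (H F : MvPolynomial (Idx × Λ) ℂ) : pb H (c • F) = c • pb H F := by
  simp only [pb, Derivation.map_smul, Finset.smul_sum, smul_mul_assoc, mul_smul_comm]

theorem pb_mul_right (H F G : MvPolynomial (Idx × Λ) ℂ) :
    pb H (F * G) = F * pb H G + G * pb H F := by
  simp only [pb, Derivation.leibniz, smul_eq_mul, Finset.mul_sum, ← Finset.sum_add_distrib]
  refine Finset.sum_congr rfl fun x _ => Finset.sum_congr rfl fun i _ =>
    Finset.sum_congr rfl fun j _ => Finset.sum_congr rfl fun k _ => by ring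

noncomputable def pbBilin :
    MvPolynomial (Idx × Λ) ℂ →ₗ[ℂ] MvPolynomial (Idx × Λ) ℂ →ₗ[ℂ] MvPolynomial (Idx × Λ) ℂ :=
  LinearMap.mk₂ ℂ pb pb_add_left pb_smul_left pb_add_right pb_smul_right

noncomputable def pbDerivation (H : MvPolynomial (Idx × Λ) ℂ) :
    Derivation ℂ (MvPolynomial (Idx × Λ) ℂ) (MvPolynomial (Idx × Λ) ℂ) :=
  Derivation.mk' (pbBilin H) (pb_mul_right H)

theorem pb_sum_smul_monom (s t : Finset ((Idx × Λ) →₀ ℕ)) (a b : ((Idx × Λ) →₀ ℕ) → ℂ) :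
    pb (∑ α ∈ s, a α • monom α) (∑ γ ∈ t, b γ • monom γ) =
      ∑ α ∈ s, ∑ γ ∈ t, (a α * b γ) • pb (monom α) (monom γ) := by
  change pbBilin _ _ = _
  simp only [map_sum, map_smul, LinearMap.sum_apply, LinearMap.smul_apply, Finset.smul_sum,
    smul_smul]
  rw [Finset.sum_comm]
  simp_rw [mul_comm (b _)]
  rfl

theorem pb_casimir (H : MvPolynomial (Idx × Λ) ℂ) (x : Λ) : pb H (casimir x) = 0 := by
  classical
  refine Finset.sum_eq_zero fun y _ => Finset.sum_eq_zero fun i _ => ?_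
  by_cases hy : y = x
  · subst hy
    cases i <;>
    · simp only [Idx.sum_univ, casimir, map_add, pderiv_C_mul]
      simp only [Derivation.leibniz, pderiv_X, eps, smul_eq_mul]
      simp [show (C 2 : MvPolynomial (Idx × Λ) ℂ) = 2 from map_ofNat C 2]
      ring
  · have hX : ∀ j k : Idx, pderiv (j, y) (X (k, x) : MvPolynomial (Idx × Λ) ℂ) = 0 :=
      fun j k => pderiv_X_of_ne fun h => hy (congrArg Prod.snd h).symm
    simp [casimir, Derivation.leibniz, hX]

def SolvesEquationsOfMotion (V : ((Idx × Λ) →₀ ℕ) →₀ ℂ) (M : ℝ → Λ → Fin 3 → ℝ) : Prop :=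
  ∀ (i : Idx) (x : Λ) (τ : ℝ),
    HasDerivAt (fun τ' => coord i (M τ' x)) (evalAt (M τ) (pb (Hcl V) (X (i, x)))) τ

theorem SolvesEquationsOfMotion.hasDerivAt_evalAt {V : ((Idx × Λ) →₀ ℕ) →₀ ℂ}
    {M : ℝ → Λ → Fin 3 → ℝ} (hM : SolvesEquationsOfMotion V M) (F : MvPolynomial (Idx × Λ) ℂ)
    (τ : ℝ) : HasDerivAt (fun τ => evalAt (M τ) F) (evalAt (M τ) (pb (Hcl V) F)) τ :=
  hasDerivAt_eval_of_derivation (D := pbDerivation (Hcl V)) (fun p => hM p.1 p.2 τ) F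

theorem SolvesEquationsOfMotion.inBall {V : ((Idx × Λ) →₀ ℕ) →₀ ℂ} {M : ℝ → Λ → Fin 3 → ℝ}
    (hM : SolvesEquationsOfMotion V M) (hM0 : inBall (M 0)) (τ : ℝ) : inBall (M τ) := by
  intro x
  have hconserved : ∀ σ, HasDerivAt (fun σ => evalAt (M σ) (casimir x)) 0 σ := fun σ => by
    simpa only [pb_casimir, evalAt, map_zero] using hM.hasDerivAt_evalAt (casimir x) σ
  have hconst := is_const_of_deriv_eq_zero (fun σ => (hconserved σ).differentiableAt)
    (fun σ => (hconserved σ).deriv) τ 0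
  rw [evalAt_casimir, evalAt_casimir, Complex.ofReal_inj] at hconst
  exact hconst ▸ hM0 x

theorem SolvesEquationsOfMotion.hasDerivAt_pow_mul_evalAt_pbIter {V : ((Idx × Λ) →₀ ℕ) →₀ ℂ}
    {M : ℝ → Λ → Fin 3 → ℝ} (hM : SolvesEquationsOfMotion V M)
    (t : ℝ) (A : MvPolynomial (Idx × Λ) ℂ) (l : ℕ) (τ : ℝ) :
    HasDerivAt (fun τ => (t : ℂ) ^ l * evalAt (M (t * τ)) (pbIter (Hcl V) l A))
      ((t : ℂ) ^ (l + 1) * evalAt (M (t * τ)) (pbIter (Hcl V) (l + 1) A)) τ := by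
  have hlin : HasDerivAt (fun τ : ℝ => t * τ) t τ := by
    simpa using (hasDerivAt_id τ).const_mul t
  refine (((hM.hasDerivAt_evalAt _ (t * τ)).scomp τ hlin).const_mul ((t : ℂ) ^ l)).congr_deriv ?_
  rw [pow_succ, Complex.real_smul, pbIter]
  ring

theorem sum_wt (α : (Idx × Λ) →₀ ℕ) : ∑ x, wt α x = deg α := by
  rw [deg_eq_degree, Finsupp.degree_eq_sum, Fintype.sum_prod_type, Finset.sum_comm]
  rfl

theorem wt_le_deg (α : (Idx × Λ) →₀ ℕ) (x : Λ) : wt α x ≤ deg α :=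
  sum_wt α ▸ Finset.single_le_sum (fun _ _ => Nat.zero_le _) (Finset.mem_univ x)

theorem weightedNorm_pb_monom_le (θ : ℝ) (α γ : (Idx × Λ) →₀ ℕ) :
    weightedNorm θ (pb (monom α) (monom γ)) ≤
      ∑ x, (wt α x : ℝ) * wt γ x * Real.exp (θ * (deg α + deg γ - 1)) := by
  set E := Real.exp (θ * (deg α + deg γ - 1))
  refine (weightedNorm_sum_le _ _).trans (Finset.sum_le_sum fun x _ => ?_)
  calc _ ≤ ∑ i, ∑ j, ∑ k, ‖eps i j k‖ * α (i, x) * γ (j, x) * E :=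
        (weightedNorm_sum_le _ _).trans <| Finset.sum_le_sum fun i _ =>
          (weightedNorm_sum_le _ _).trans <| Finset.sum_le_sum fun j _ =>
            (weightedNorm_sum_le _ _).trans <| Finset.sum_le_sum fun k _ =>
              weightedNorm_pb_term_le θ α γ i j k x
    _ ≤ ∑ i, ∑ j, (α (i, x) : ℝ) * γ (j, x) * E := by
        refine Finset.sum_le_sum fun i _ => Finset.sum_le_sum fun j _ => ?_
        simp_rw [mul_assoc, ← Finset.sum_mul]
        exact mul_le_of_le_one_left (by positivity) (sum_norm_eps_le_one i j)
    _ = wt α x * wt γ x * E := by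
        simp only [wt, Nat.cast_sum, Finset.sum_mul, Finset.mul_sum]
        exact Finset.sum_comm

theorem weightedNorm_pb_le (θ : ℝ) (F G : MvPolynomial (Idx × Λ) ℂ) :
    weightedNorm θ (pb F G) ≤ ∑ α ∈ F.support, ∑ γ ∈ G.support,
      ‖F.coeff α‖ * ‖G.coeff γ‖ * weightedNorm θ (pb (monom α) (monom γ)) := by
  conv_lhs => rw [eq_sum_smul_monom F, eq_sum_smul_monom G, pb_sum_smul_monom]
  refine (weightedNorm_sum_le _ _).trans (Finset.sum_le_sum fun α _ =>
    (weightedNorm_sum_le _ _).trans (Finset.sum_le_sum fun γ _ => ?_))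
  exact (weightedNorm_smul_le _ _).trans_eq (by rw [norm_mul])

variable [Nonempty Λ]

theorem sum_norm_mul_wt_mul_exp_le (V : ((Idx × Λ) →₀ ℕ) →₀ ℂ) {θ : ℝ} (hθ : θ ≤ 1)
    (d : ℝ) (x : Λ) :
    ∑ α ∈ V.support, ‖V α‖ * wt α x * Real.exp (θ * (deg α + d - 1)) ≤
      Vnorm (fun α => V α) * (Real.exp (θ * d) / Real.exp 1) := by
  calc _ ≤ ∑ α ∈ V.support, wt α x * ‖V α‖ * Real.exp (deg α) * (Real.exp (θ * d) / Real.exp 1) :=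
        Finset.sum_le_sum fun α _ => ?_
    _ ≤ Vnorm (fun α => V α) * (Real.exp (θ * d) / Real.exp 1) := by
        rw [← Finset.sum_mul]
        gcongr
        exact sum_wt_mul_norm_mul_exp_le_Vnorm V x
  rcases eq_or_ne (wt α x) 0 with hw | hw
  · simp [hw]
  have hdeg : (1 : ℝ) ≤ deg α := by
    exact_mod_cast (Nat.one_le_iff_ne_zero.mpr hw).trans (wt_le_deg α x)
  rw [mul_assoc (_ * _), ← Real.exp_sub, ← Real.exp_add, mul_comm (‖V α‖)]
  gcongr
  nlinarith

theorem sum_norm_mul_sum_wt_mul_wt_mul_exp_le (V : ((Idx × Λ) →₀ ℕ) →₀ ℂ) {θ δ : ℝ}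
    (hδ : 0 < δ) (hθδ : θ + δ ≤ 1) (γ : (Idx × Λ) →₀ ℕ) :
    ∑ α ∈ V.support, ‖V α‖ * ∑ x, (wt α x : ℝ) * wt γ x * Real.exp (θ * (deg α + deg γ - 1)) ≤
      Vnorm (fun α => V α) / (Real.exp 1 * Real.exp 1 * δ) * Real.exp ((θ + δ) * deg γ) := by
  have hV := Vnorm_nonneg (fun α => V α)
  calc _ = ∑ x, (wt γ x : ℝ) *
        ∑ α ∈ V.support, ‖V α‖ * wt α x * Real.exp (θ * (deg α + deg γ - 1)) := by
        simp_rw [Finset.mul_sum]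
        rw [Finset.sum_comm]
        exact Finset.sum_congr rfl fun x _ => Finset.sum_congr rfl fun α _ => by ring
    _ ≤ ∑ x, (wt γ x : ℝ) * (Vnorm (fun α => V α) * (Real.exp (θ * deg γ) / Real.exp 1)) := by
        gcongr with x
        exact sum_norm_mul_wt_mul_exp_le V (by linarith) _ x
    _ = Vnorm (fun α => V α) / Real.exp 1 * (deg γ * Real.exp (θ * deg γ)) := by
        rw [← Finset.sum_mul, ← Nat.cast_sum, sum_wt]
        ring
    _ ≤ Vnorm (fun α => V α) / Real.exp 1 * (Real.exp ((θ + δ) * deg γ) / (Real.exp 1 * δ)) := by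
        gcongr
        exact Real.mul_exp_le_exp_div hδ θ _
    _ = _ := by field_simp

theorem weightedNorm_pb_Hcl_le (V : ((Idx × Λ) →₀ ℕ) →₀ ℂ) {θ δ : ℝ}
    (hδ : 0 < δ) (hθδ : θ + δ ≤ 1) (F : MvPolynomial (Idx × Λ) ℂ) :
    weightedNorm θ (pb (Hcl V) F) ≤
      Vnorm (fun α => V α) / (Real.exp 1 * Real.exp 1 * δ) * weightedNorm (θ + δ) F := by
  calc _ ≤ ∑ α ∈ V.support, ∑ γ ∈ F.support, ‖V α‖ * ‖F.coeff γ‖ *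
        ∑ x, (wt α x : ℝ) * wt γ x * Real.exp (θ * (deg α + deg γ - 1)) := by
        refine (weightedNorm_pb_le θ _ F).trans ?_
        simp only [support_Hcl, coeff_Hcl]
        gcongr with α _ γ _
        exact weightedNorm_pb_monom_le θ α γ
    _ = ∑ γ ∈ F.support, ‖F.coeff γ‖ * ∑ α ∈ V.support, ‖V α‖ *
        ∑ x, (wt α x : ℝ) * wt γ x * Real.exp (θ * (deg α + deg γ - 1)) := by
        rw [Finset.sum_comm]
        simp_rw [Finset.mul_sum]
        exact Finset.sum_congr rfl fun γ _ => Finset.sum_congr rfl fun α _ =>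
          Finset.sum_congr rfl fun x _ => by ring
    _ ≤ ∑ γ ∈ F.support, ‖F.coeff γ‖ *
        (Vnorm (fun α => V α) / (Real.exp 1 * Real.exp 1 * δ) * Real.exp ((θ + δ) * deg γ)) := by
        gcongr with γ _
        exact sum_norm_mul_sum_wt_mul_wt_mul_exp_le V hδ hθδ γ
    _ = _ := by
        rw [weightedNorm, Finset.mul_sum]
        exact Finset.sum_congr rfl fun γ _ => by rw [deg_eq_degree]; ring

theorem weightedNorm_pbIter_le (V : ((Idx × Λ) →₀ ℕ) →₀ ℂ) {δ : ℝ} (hδ : 0 < δ)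
    (F : MvPolynomial (Idx × Λ) ℂ) (j : ℕ) {θ : ℝ} (hθ : θ + j * δ ≤ 1) :
    weightedNorm θ (pbIter (Hcl V) j F) ≤
      (Vnorm (fun α => V α) / (Real.exp 1 * Real.exp 1 * δ)) ^ j * weightedNorm (θ + j * δ) F := by
  induction j generalizing θ with
  | zero => simp [pbIter]
  | succ j ih =>
    push_cast at hθ ⊢
    have hc : 0 ≤ Vnorm (fun α => V α) / (Real.exp 1 * Real.exp 1 * δ) := by
      have := Vnorm_nonneg (fun α => V α); positivity
    calc weightedNorm θ (pb (Hcl V) (pbIter (Hcl V) j F))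
        ≤ Vnorm (fun α => V α) / (Real.exp 1 * Real.exp 1 * δ) *
            weightedNorm (θ + δ) (pbIter (Hcl V) j F) :=
          weightedNorm_pb_Hcl_le V hδ (by nlinarith [(Nat.cast_nonneg j : (0 : ℝ) ≤ j)]) _
      _ ≤ _ := mul_le_mul_of_nonneg_left (ih (θ := θ + δ) (by linarith)) hc
      _ = _ := by rw [show θ + (j + 1) * δ = θ + δ + j * δ by ring, pow_succ']; ring

theorem supNorm_pbIter_monom_le (V : ((Idx × Λ) →₀ ℕ) →₀ ℂ) (β : (Idx × Λ) →₀ ℕ) (l : ℕ) :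
    supNorm (pbIter (Hcl V) l (monom β)) ≤
      (Vnorm (fun α => V α) * l / (Real.exp 1 * Real.exp 1)) ^ l * Real.exp (deg β) := by
  refine (supNorm_le_weightedNorm_zero _).trans ?_
  rcases Nat.eq_zero_or_pos l with rfl | hl
  · simp [pbIter, weightedNorm_monom]
  have hl' : (0 : ℝ) < l := Nat.cast_pos.mpr hl
  have := weightedNorm_pbIter_le V (one_div_pos.mpr hl') (monom β) l
    (by rw [zero_add, mul_one_div_cancel hl'.ne'])
  rw [zero_add, mul_one_div_cancel hl'.ne', weightedNorm_monom, one_mul] at this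
  refine this.trans_eq ?_
  congr 2
  field_simp

theorem pow_div_factorial_mul_supNorm_pbIter_le (V : ((Idx × Λ) →₀ ℕ) →₀ ℂ)
    (β : (Idx × Λ) →₀ ℕ) {T : ℝ} (hT : 0 ≤ T) (l : ℕ) :
    T ^ l / l.factorial * supNorm (pbIter (Hcl V) l (monom β)) ≤
      Real.exp (deg β) * (T * Vnorm (fun α => V α) / Real.exp 1) ^ l := by
  have hV := Vnorm_nonneg (fun α => V α)
  have hfact : (l : ℝ) ^ l / l.factorial ≤ Real.exp 1 ^ l := by
    rw [Real.exp_one_pow]; exact Real.pow_div_factorial_le_exp _ (Nat.cast_nonneg l) l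
  calc _ ≤ T ^ l / l.factorial *
        ((Vnorm (fun α => V α) * l / (Real.exp 1 * Real.exp 1)) ^ l * Real.exp (deg β)) := by
        gcongr; exact supNorm_pbIter_monom_le V β l
    _ = Real.exp (deg β) * (T * Vnorm (fun α => V α) / Real.exp 1) ^ l *
        ((l : ℝ) ^ l / l.factorial / Real.exp 1 ^ l) := by
        simp only [div_pow, mul_pow]
        field_simp
    _ ≤ Real.exp (deg β) * (T * Vnorm (fun α => V α) / Real.exp 1) ^ l * 1 := by
        gcongr
        exact div_le_one_of_le₀ hfact (by positivity)
    _ = _ := mul_one _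

theorem summable_pow_div_factorial_mul_supNorm_pbIter (V : ((Idx × Λ) →₀ ℕ) →₀ ℂ)
    (β : (Idx × Λ) →₀ ℕ) {t : ℝ} (ht : |t| < (Vnorm fun α => V α)⁻¹) :
    Summable fun l : ℕ => |t| ^ l / l.factorial * supNorm (pbIter (Hcl V) l (monom β)) :=
  .of_nonneg_of_le (fun l => by have := supNorm_nonneg (pbIter (Hcl V) l (monom β)); positivity)
    (pow_div_factorial_mul_supNorm_pbIter_le V β (abs_nonneg t))
    ((summable_geometric_of_lt_one (by have := Vnorm_nonneg (fun α => V α); positivity)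
      (abs_mul_Vnorm_div_exp_lt_one _ ht)).mul_left _)

theorem tendsto_mul_pow_mul_supNorm_pbIter_div_factorial (V : ((Idx × Λ) →₀ ℕ) →₀ ℂ)
    (β : (Idx × Λ) →₀ ℕ) {t : ℝ} (ht : |t| < (Vnorm fun α => V α)⁻¹) :
    Tendsto (fun n : ℕ => n * (|t| ^ n * supNorm (pbIter (Hcl V) n (monom β)) / n.factorial))
      atTop (𝓝 0) := by
  set r := |t| * Vnorm (fun α => V α) / Real.exp 1
  have hgeom := (tendsto_self_mul_const_pow_of_lt_one
    (by have := Vnorm_nonneg (fun α => V α); positivity)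
    (abs_mul_Vnorm_div_exp_lt_one _ ht)).const_mul (Real.exp (deg β))
  rw [mul_zero] at hgeom
  refine squeeze_zero (fun n => by have := supNorm_nonneg (pbIter (Hcl V) n (monom β)); positivity)
    (fun n => ?_) hgeom
  calc _ = (n : ℝ) * (|t| ^ n / n.factorial * supNorm (pbIter (Hcl V) n (monom β))) := by ring
    _ ≤ n * (Real.exp (deg β) * r ^ n) := mul_le_mul_of_nonneg_left
        (pow_div_factorial_mul_supNorm_pbIter_le V β (abs_nonneg t) n) n.cast_nonneg
    _ = _ := by ring

end Bracket

end Lattice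

theorem lie_schwinger_series_converges_to_flow_general {Λ : Type} [Fintype Λ]
    [Nonempty Λ]
    (V : ((Idx × Λ) →₀ ℕ) →₀ ℂ) (β : (Idx × Λ) →₀ ℕ)
    (t : ℝ) (ht : |t| < (Vnorm fun α => V α)⁻¹)
    (M : ℝ → Λ → Fin 3 → ℝ) (hM0 : inBall (M 0))
    (hODE : ∀ (i : Idx) (x : Λ) (τ : ℝ),
      HasDerivAt (fun τ' => coord i (M τ' x))
        (evalAt (M τ) (pb (Hcl V) (MvPolynomial.X (i, x)))) τ) :
    Summable (fun l : ℕ =>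
        |t| ^ l / (l.factorial : ℝ) * supNorm (pbIter (Hcl V) l (monom β))) ∧
    HasSum (fun l : ℕ =>
        ((t : ℂ) ^ l / (l.factorial : ℂ)) * evalAt (M 0) (pbIter (Hcl V) l (monom β)))
      (evalAt (M t) (monom β)) := by
  have hsummable := summable_pow_div_factorial_mul_supNorm_pbIter V β ht
  refine ⟨hsummable, ?_⟩
  have hball := SolvesEquationsOfMotion.inBall hODE hM0
  have hderivBound : ∀ l τ, ‖(t : ℂ) ^ l * evalAt (M (t * τ)) (pbIter (Hcl V) l (monom β))‖ ≤
      |t| ^ l * supNorm (pbIter (Hcl V) l (monom β)) := fun l τ => by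
    rw [norm_mul, norm_pow, Complex.norm_real, Real.norm_eq_abs]
    exact mul_le_mul_of_nonneg_left (norm_evalAt_le_supNorm (hball _) _) (by positivity)
  rw [hasSum_iff_tendsto_nat_of_summable_norm (hsummable.of_nonneg_of_le (fun _ => norm_nonneg _)
    fun l => by
      rw [norm_mul, norm_div, norm_pow, Complex.norm_real, Real.norm_eq_abs, Complex.norm_natCast]
      exact mul_le_mul_of_nonneg_left (norm_evalAt_le_supNorm (hball 0) _) (by positivity))]
  convert tendsto_sum_taylor_of_hasDerivAt
    (SolvesEquationsOfMotion.hasDerivAt_pow_mul_evalAt_pbIter hODE t (monom β))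
    (fun l τ _ => hderivBound l τ) (tendsto_mul_pow_mul_supNorm_pbIter_div_factorial V β ht)
    using 2 with n
  · refine Finset.sum_congr rfl fun l _ => ?_
    rw [Complex.real_smul, mul_zero]
    push_cast
    ring
  · simp [pbIter]

/-- **Convergence of the Lie–Schwinger series to the flow.**
For `|t| < ‖V‖⁻¹` the series `Σ_{l≥0} (t^l/l!) {H_Λ, A}^{(l)}` converges
absolutely in the sup-norm on `Ξ_Λ` for the polynomial observable `A = M^β`,
and its sum equals `A ∘ φ^t_Λ`: evaluated at any initial condition `M(0) ∈ Ξ_Λ`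
of a solution `M` of the Hamiltonian equations of motion, the sum of the series
is `A(M(t))`. -/
theorem lie_schwinger_series_converges_to_flow {Λ : Type} [Fintype Λ] [DecidableEq Λ]
    [Nonempty Λ]
    (V : ((Idx × Λ) →₀ ℕ) →₀ ℂ) (β : (Idx × Λ) →₀ ℕ)
    (t : ℝ) (ht : |t| < (Vnorm fun α => V α)⁻¹)
    (M : ℝ → Λ → Fin 3 → ℝ) (hM0 : inBall (M 0))
    (hODE : ∀ (i : Idx) (x : Λ) (τ : ℝ),
      HasDerivAt (fun τ' => coord i (M τ' x))
        (evalAt (M τ) (pb (Hcl V) (MvPolynomial.X (i, x)))) τ) :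
    Summable (fun l : ℕ =>
        |t| ^ l / (l.factorial : ℝ) * supNorm (pbIter (Hcl V) l (monom β))) ∧
    HasSum (fun l : ℕ =>
        ((t : ℂ) ^ l / (l.factorial : ℂ)) * evalAt (M 0) (pbIter (Hcl V) l (monom β)))
      (evalAt (M t) (monom β)) :=
  lie_schwinger_series_converges_to_flow_general V β t ht M hM0 hODE
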